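/- arXiv:1703.02290 — 2 statements merged into one kernel-verified Lean document; each statement's English description precedes it below -/
import Mathlib

section
/- Let G be a finite group generated by an involution x and an element y of order 3, with G ≇ ℤ/6, G ≇ ℤ₃ wr ℤ₂, and suppose G has a subgroup H of index 2. Then there is a Cayley digraph Γ on G with Cayley index 2 such that Aut(Γ) contains a regular subgroup distinct from G and isomorphic to H × ℤ₂. -/
/-- The automorphism group of a digraph given by an adjacency relation. -/
def dAut {V : Type*} (adj : V → V → Prop) : Subgroup (Equiv.Perm V) where
  carrier := {σ | ∀ u v : V, adj (σ u) (σ v) ↔ adj u v}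
  one_mem' := by intro u v; rfl
  mul_mem' := by
    intro a b ha hb u v
    simp only [Set.mem_setOf_eq] at *
    rw [Equiv.Perm.mul_apply, Equiv.Perm.mul_apply, ha, hb]
  inv_mem' := by
    intro a ha u v
    simpa using (ha (a⁻¹ u) (a⁻¹ v)).symm

/-- Adjacency of the Cayley digraph `Cay(G,S)`. -/
def cayAdj (G : Type*) [Group G] (S : Set G) : G → G → Prop :=
  fun u v => v * u⁻¹ ∈ S

/-- The right regular representation of `G` in `Equiv.Perm G`. -/
def rightReg (G : Type*) [Group G] : G →* Equiv.Perm G where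
  toFun g := Equiv.mulRight g⁻¹
  map_one' := by ext x; simp
  map_mul' := by intro a b; ext x; simp [mul_assoc]

/-- The right regular representation of `G` as a subgroup of `Aut(Cay(G,S))`. -/
def cayleyRR (G : Type*) [Group G] (S : Set G) :
    Subgroup (dAut (cayAdj G S)) :=
  ((rightReg G).range).subgroupOf (dAut (cayAdj G S))

/-- A subgroup of `Equiv.Perm V` is regular if it is sharply transitive on `V`. -/
def IsRegularSub {V : Type*} (H : Subgroup (Equiv.Perm V)) : Prop :=
  ∀ v w : V, ∃! h : H, (h : Equiv.Perm V) v = w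

/-- Adjacency of the cartesian product of two digraphs. -/
def cartAdj {α β : Type*} (adjG : α → α → Prop) (adjD : β → β → Prop) :
    α × β → α × β → Prop :=
  fun u v => (u.1 = v.1 ∧ adjD u.2 v.2) ∨ (u.2 = v.2 ∧ adjG u.1 v.1)

/-- `pathLe adj i u v` : there is a directed path of length at most `i` from `u` to `v`. -/
def pathLe {V : Type*} (adj : V → V → Prop) : ℕ → V → V → Prop
  | 0, u, v => u = v
  | (n+1), u, v => pathLe adj n u v ∨ ∃ w, pathLe adj n u w ∧ adj w v

/-- The coordinate-swap automorphism of `Z₃ × Z₃`. -/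
def swapAut : MulAut (Multiplicative (ZMod 3) × Multiplicative (ZMod 3)) :=
  MulEquiv.prodComm

/-- The action of `Z₂` on `Z₃ × Z₃` by swapping coordinates. -/
def swapAction :
    Multiplicative (ZMod 2) →*
      MulAut (Multiplicative (ZMod 3) × Multiplicative (ZMod 3)) :=
  AddMonoidHom.toMultiplicativeLeft
    (ZMod.lift 2 ⟨zmultiplesHom _ (Additive.ofMul swapAut), by
      have h : swapAut * swapAut = 1 := by ext z <;> rfl
      simp only [zmultiplesHom_apply]
      rw [show ((2 : ℕ) : ℤ) = (1 : ℤ) + 1 by norm_num, add_zsmul, one_zsmul,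
        ← ofMul_mul, h, ofMul_one]⟩)

/-- The wreath product `Z₃ ≀ Z₂ ≅ (Z₃ × Z₃) ⋊ Z₂`. -/
abbrev Z3wrZ2 : Type :=
  (Multiplicative (ZMod 3) × Multiplicative (ZMod 3)) ⋊[swapAction]
    Multiplicative (ZMod 2)

/-!
Put `z = x y x⁻¹` and `S = {x, y, z}`; `x` and `y` do not commute, for otherwise `G` would be
cyclic of order 6. In `Cay(G, S)` the `x`-arcs are exactly the arcs lying on no directed
triangle (count modulo `H`), and every directed triangle of `y`- and `z`-arcs is monochromatic.
Hence an automorphism fixing `1` commutes with left multiplication by `x` and, at every vertex,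
either keeps or swaps the labels `y` and `z`, consistently along `x`- and `y`-arcs; as `x` and
`y` generate `G`, it is the identity or conjugation by `x`. So the right regular representation
has index 2 in the automorphism group. Conjugation by `x` preserves `S`, so left multiplication
by `x` is an automorphism too, and `H` acting on the right together with `⟨x⟩` acting on the
left is a regular subgroup isomorphic to `H × ℤ₂` (as `⟨x⟩` complements the normal subgroup
`H`); it contains left multiplication by `x`, which is not a right translation since `x` is
not central.
-/

open Function Subgroup

section CayleyDigraph

variable {G : Type*} [Group G]

@[simp]
lemma rightReg_apply (g u : G) : rightReg G g u = u * g⁻¹ := rfl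

lemma cayAdj_iff {S : Set G} {u v : G} : cayAdj G S u v ↔ v * u⁻¹ ∈ S := Iff.rfl

lemma rightReg_mem_dAut (S : Set G) (g : G) : rightReg G g ∈ dAut (cayAdj G S) := by
  intro u v
  simp only [cayAdj_iff, rightReg_apply, mul_inv_rev, inv_inv, mul_assoc, inv_mul_cancel_left]

lemma conj_mem_dAut {S : Set G} {g : G} (hS : ∀ s, g * s * g⁻¹ ∈ S ↔ s ∈ S) :
    (MulAut.conj g).toEquiv ∈ dAut (cayAdj G S) := by
  intro u v
  change g * v * g⁻¹ * (g * u * g⁻¹)⁻¹ ∈ S ↔ v * u⁻¹ ∈ S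
  rw [← hS (v * u⁻¹)]
  group

lemma toPermHom_mem_dAut {S : Set G} {g : G} (hS : ∀ s, g * s * g⁻¹ ∈ S ↔ s ∈ S) :
    MulAction.toPermHom G G g ∈ dAut (cayAdj G S) := by
  intro u v
  simp only [MulAction.toPermHom_apply, MulAction.toPerm_apply, smul_eq_mul, cayAdj_iff]
  rw [← hS (v * u⁻¹)]
  group

lemma mul_inv_mem_of_mem_dAut {S : Set G} {β : Equiv.Perm G} (hβ : β ∈ dAut (cayAdj G S))
    {s : G} (hs : s ∈ S) (u : G) : β (s * u) * (β u)⁻¹ ∈ S :=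
  (hβ u (s * u)).2 (by rwa [cayAdj_iff, mul_inv_cancel_right])

lemma commute_of_toPermHom_mem_range_rightReg {g : G}
    (hg : MulAction.toPermHom G G g ∈ (rightReg G).range) (h : G) : Commute g h := by
  obtain ⟨k, hk⟩ := hg
  have hk1 := DFunLike.congr_fun hk 1
  have hkh := DFunLike.congr_fun hk h
  simp only [rightReg_apply, one_mul, MulAction.toPermHom_apply, MulAction.toPerm_apply,
    smul_eq_mul, mul_one] at hk1 hkh
  rw [Commute, SemiconjBy, ← hkh, hk1]

lemma commute_of_conj_mem_range_rightReg {g : G}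
    (hg : (MulAut.conj g).toEquiv ∈ (rightReg G).range) (h : G) : Commute g h := by
  obtain ⟨k, hk⟩ := hg
  have hk1 := DFunLike.congr_fun hk 1
  have hkh := DFunLike.congr_fun hk h
  change 1 * k⁻¹ = g * 1 * g⁻¹ at hk1
  change h * k⁻¹ = g * h * g⁻¹ at hkh
  rw [mul_one, mul_inv_cancel, one_mul, inv_eq_one] at hk1
  rw [hk1, inv_one, mul_one, eq_comm, mul_inv_eq_iff_eq_mul] at hkh
  exact hkh

end CayleyDigraph

lemma Subgroup.index_eq_two_of_mem_or_mul_mem {A : Type*} [Group A] {R : Subgroup A} {c : A}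
    (hc : c ∉ R) (h : ∀ b, b ∈ R ∨ b * c ∈ R) : R.index = 2 :=
  index_eq_two_iff.2 ⟨c, fun b => (xor_iff_or_and_not_and _ _).2
    ⟨(h b).symm, fun ⟨hbc, hb⟩ => hc (by simpa using mul_mem (inv_mem hb) hbc)⟩⟩

lemma isRegularSub_range_of_bijective {M V : Type*} [Group M] (φ : M →* Equiv.Perm V)
    (h : ∀ v, Bijective fun m => φ m v) : IsRegularSub φ.range := by
  intro v w
  obtain ⟨m, hm⟩ := (h v).2 w
  refine ⟨⟨φ m, m, rfl⟩, hm, ?_⟩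
  rintro ⟨_, m', rfl⟩ hm'
  exact Subtype.ext (congrArg φ ((h v).1 (hm'.trans hm.symm)))

section RegularSubgroup

variable {G : Type*} [Group G]

lemma commute_rightReg_toPermHom (g h : G) :
    Commute (rightReg G g) (MulAction.toPermHom G G h) :=
  Equiv.ext fun _ => by simp [mul_assoc]

def rightLeftHom (N B : Subgroup G) : N × B →* Equiv.Perm G :=
  ((rightReg G).comp N.subtype).noncommCoprod ((MulAction.toPermHom G G).comp B.subtype)
    fun n b => commute_rightReg_toPermHom (n : G) (b : G)

@[simp]
lemma rightLeftHom_apply (N B : Subgroup G) (p : N × B) (u : G) :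
    rightLeftHom N B p u = p.2 * u * (p.1 : G)⁻¹ :=
  rfl

lemma range_rightLeftHom_le {N B : Subgroup G} {A : Subgroup (Equiv.Perm G)}
    (hN : ∀ n ∈ N, rightReg G n ∈ A) (hB : ∀ b ∈ B, MulAction.toPermHom G G b ∈ A) :
    (rightLeftHom N B).range ≤ A := by
  rintro _ ⟨p, rfl⟩
  exact mul_mem (hN _ p.1.2) (hB _ p.2.2)

lemma bijective_rightLeftHom_apply {N B : Subgroup G} [hN : N.Normal] (h : IsComplement' B N)
    (v : G) : Bijective fun p => rightLeftHom N B p v := by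
  rw [bijective_iff_existsUnique]
  intro w
  obtain ⟨⟨b, m⟩, hbm, huniq⟩ := isComplement_iff_existsUnique.1 h (w * v⁻¹)
  have hn : v⁻¹ * (m : G)⁻¹ * v ∈ N := by simpa using hN.conj_mem _ (inv_mem m.2) v⁻¹
  refine ⟨(⟨_, hn⟩, b), ?_, ?_⟩
  · calc (b : G) * v * (v⁻¹ * (m : G)⁻¹ * v)⁻¹ = b * m * v := by group
      _ = w := by rw [hbm, inv_mul_cancel_right]
  · rintro ⟨n', b'⟩ hw
    simp only [rightLeftHom_apply] at hw
    have hm' : v * (n' : G)⁻¹ * v⁻¹ ∈ N := hN.conj_mem _ (inv_mem n'.2) v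
    obtain ⟨hb, hm⟩ := Prod.ext_iff.1 (huniq (b', ⟨_, hm'⟩) (by rw [← hw]; group))
    simp only [Subtype.ext_iff] at hb hm
    refine Prod.ext (Subtype.ext ?_) (Subtype.ext hb)
    change (n' : G) = v⁻¹ * (m : G)⁻¹ * v
    rw [← hm]
    group

lemma isRegularSub_range_rightLeftHom {N B : Subgroup G} [N.Normal] (h : IsComplement' B N) :
    IsRegularSub (rightLeftHom N B).range :=
  isRegularSub_range_of_bijective _ (bijective_rightLeftHom_apply h)

lemma injective_rightLeftHom {N B : Subgroup G} [N.Normal] (h : IsComplement' B N) :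
    Injective (rightLeftHom N B) :=
  fun _ _ hpq => (bijective_rightLeftHom_apply h 1).1 (DFunLike.congr_fun hpq 1)

lemma isComplement'_zpowers_of_index_eq_two {H : Subgroup G} (hH : H.index = 2) {x : G}
    (hx : x ^ 2 = 1) (hxH : x ∉ H) : IsComplement' (zpowers x) H := by
  refine isComplement'_of_disjoint_and_mul_eq_univ (disjoint_def.2 fun {g} hg hgH => ?_) ?_
  · obtain ⟨k, rfl⟩ := mem_zpowers_iff.1 hg
    obtain ⟨m, rfl | rfl⟩ := Int.even_or_odd' k
    · rw [zpow_mul, zpow_two, ← sq, hx, one_zpow]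
    · rw [zpow_add_one, zpow_mul, zpow_two, ← sq, hx, one_zpow, one_mul] at hgH
      exact absurd hgH hxH
  · refine Set.eq_univ_of_forall fun g => ?_
    by_cases hg : g ∈ H
    · simpa using Set.mul_mem_mul (one_mem (zpowers x)) hg
    · have hxg : x * g ∈ H := (mul_mem_iff_of_index_two hH).2 (iff_of_false hxH hg)
      have : x * (x * g) = g := by rw [← mul_assoc, ← sq, hx, one_mul]
      exact this ▸ Set.mul_mem_mul (mem_zpowers x) hxg

noncomputable def zpowersMulEquivZModTwo {x : G} (hx : orderOf x = 2) :
    zpowers x ≃* Multiplicative (ZMod 2) :=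
  mulEquivOfPrimeCardEq (by rw [Nat.card_zpowers, hx]) (by simp)

end RegularSubgroup

lemma mul_self_inv_of_pow_three {G : Type*} [Group G] {a : G} (ha : a ^ 3 = 1) :
    (a * a)⁻¹ = a :=
  inv_eq_of_mul_eq_one_right (by rw [← pow_three', ha])

lemma eq_of_mul_mul_eq_one_of_pow_three {G : Type*} [Group G] {a b : G} (ha : a ^ 3 = 1)
    (h : b * a * a = 1) : b = a := by
  rw [mul_assoc] at h
  rw [eq_inv_of_mul_eq_one_left h, mul_self_inv_of_pow_three ha]

structure IndexTwoPair (G : Type*) [Group G] where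
  x : G
  y : G
  H : Subgroup G
  index_eq_two : H.index = 2
  sq_x : x ^ 2 = 1
  pow_three_y : y ^ 3 = 1
  y_mem : y ∈ H
  x_notMem : x ∉ H
  not_commute : ¬ Commute x y

namespace IndexTwoPair

variable {G : Type*} [Group G] (d : IndexTwoPair G)

def z : G := d.x * d.y * d.x⁻¹

def S : Set G := {d.x, d.y, d.z}

def conjX : Equiv.Perm G := (MulAut.conj d.x).toEquiv

lemma conjX_apply (g : G) : d.conjX g = d.x * g * d.x⁻¹ := rfl

lemma x_inv : d.x⁻¹ = d.x := inv_eq_of_mul_eq_one_right (by rw [← sq, d.sq_x])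

lemma conjX_conjX (g : G) : d.conjX (d.conjX g) = g := by
  rw [conjX_apply, conjX_apply, d.x_inv, ← mul_assoc, ← mul_assoc, ← sq, d.sq_x, one_mul,
    mul_assoc, ← sq, d.sq_x, mul_one]

lemma conjX_mul_self : d.conjX * d.conjX = 1 := Equiv.ext d.conjX_conjX

lemma conjX_y : d.conjX d.y = d.z := rfl

lemma x_mul_z : d.x * d.z = d.y * d.x := by
  rw [z, d.x_inv, ← mul_assoc, ← mul_assoc, ← sq, d.sq_x, one_mul]

lemma pow_three_z : d.z ^ 3 = 1 := by
  rw [z, ← MulAut.conj_apply, ← map_pow, d.pow_three_y, map_one]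

lemma z_mem : d.z ∈ d.H :=
  (normal_of_index_eq_two d.index_eq_two).conj_mem _ d.y_mem _

lemma y_ne_z : d.y ≠ d.z := fun h => d.not_commute (mul_inv_eq_iff_eq_mul.1 h.symm)

lemma mem_S {s : G} : s ∈ d.S ↔ s = d.x ∨ s = d.y ∨ s = d.z := Iff.rfl

lemma x_mem_S : d.x ∈ d.S := d.mem_S.2 (.inl rfl)

lemma y_mem_S : d.y ∈ d.S := d.mem_S.2 (.inr (.inl rfl))

lemma z_mem_S : d.z ∈ d.S := d.mem_S.2 (.inr (.inr rfl))

lemma one_notMem_S : (1 : G) ∉ d.S := by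
  have hy : d.y ≠ 1 := fun h => d.not_commute (h ▸ Commute.one_right _)
  rintro (h | h | h)
  · exact d.x_notMem (h ▸ one_mem _)
  · exact hy h.symm
  · exact hy (by simpa [z, mul_inv_eq_one] using h.symm)

lemma conj_x_mem_S_iff (s : G) : d.x * s * d.x⁻¹ ∈ d.S ↔ s ∈ d.S := by
  have hS : ∀ s ∈ d.S, d.conjX s ∈ d.S := by
    rintro s (rfl | rfl | rfl)
    · simpa [conjX_apply] using d.x_mem_S
    · exact d.z_mem_S
    · rw [← conjX_y, conjX_conjX]; exact d.y_mem_S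
  exact ⟨fun h => d.conjX_conjX s ▸ hS _ h, hS s⟩

lemma conjX_mem_dAut : d.conjX ∈ dAut (cayAdj G d.S) := conj_mem_dAut d.conj_x_mem_S_iff

lemma conjX_notMem_range : d.conjX ∉ (rightReg G).range :=
  fun h => d.not_commute (commute_of_conj_mem_range_rightReg h d.y)

lemma eq_x_of_mem_S_of_notMem {s : G} (hs : s ∈ d.S) (hsH : s ∉ d.H) : s = d.x := by
  rcases hs with h | rfl | rfl
  exacts [h, absurd d.y_mem hsH, absurd d.z_mem hsH]

lemma pow_three_of_mem_S {s : G} (hs : s ∈ d.S) (hsx : s ≠ d.x) : s ^ 3 = 1 := by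
  rcases hs with h | rfl | rfl
  exacts [absurd h hsx, d.pow_three_y, d.pow_three_z]

-- parity modulo `H` forces one of `s, t` to be `x`
lemma mul_mul_x_ne_one {s t : G} (hs : s ∈ d.S) (ht : t ∈ d.S) : t * s * d.x ≠ 1 := by
  intro h
  by_cases hsH : s ∈ d.H
  · by_cases htH : t ∈ d.H
    · exact d.x_notMem (eq_inv_of_mul_eq_one_right h ▸ inv_mem (mul_mem htH hsH))
    · rw [d.eq_x_of_mem_S_of_notMem ht htH, mul_assoc, mul_eq_one_comm, mul_assoc, ← sq,
        d.sq_x, mul_one] at h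
      exact d.one_notMem_S (h ▸ hs)
  · rw [d.eq_x_of_mem_S_of_notMem hs hsH, mul_assoc, ← sq, d.sq_x, mul_one] at h
    exact d.one_notMem_S (h ▸ ht)

lemma not_adj_of_adj_x_mul {u w : G} (h₁ : cayAdj G d.S (d.x * u) w) :
    ¬ cayAdj G d.S w u :=
  fun h₂ => d.mul_mul_x_ne_one h₁ h₂ (by group)

section Automorphism

variable {d} {β : Equiv.Perm G}

-- `x`-edges are the edges lying on no directed triangle
lemma apply_x_mul (hβ : β ∈ dAut (cayAdj G d.S)) (u : G) : β (d.x * u) = d.x * β u := by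
  obtain ⟨t, htS, hβxu⟩ : ∃ t ∈ d.S, β (d.x * u) = t * β u :=
    ⟨_, mul_inv_mem_of_mem_dAut hβ d.x_mem_S u, by rw [inv_mul_cancel_right]⟩
  rw [hβxu]
  by_contra htx
  have ht3 := d.pow_three_of_mem_S htS (by rintro rfl; exact htx rfl)
  obtain ⟨w, hw⟩ := β.surjective (t * t * β u)
  refine d.not_adj_of_adj_x_mul (u := u) (w := w) ((hβ _ _).1 ?_) ((hβ _ _).1 ?_)
  · rwa [hw, hβxu, cayAdj_iff, mul_inv_rev, mul_assoc, mul_inv_cancel_left, mul_inv_cancel_right]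
  · rwa [hw, cayAdj_iff, mul_inv_rev, mul_inv_cancel_left, mul_self_inv_of_pow_three ht3]

lemma apply_mul_eq_y_or_z (hβ : β ∈ dAut (cayAdj G d.S)) {s : G} (hs : s ∈ d.S)
    (hsx : s ≠ d.x) (u : G) : β (s * u) = d.y * β u ∨ β (s * u) = d.z * β u := by
  obtain ⟨t, htS, hβsu⟩ : ∃ t ∈ d.S, β (s * u) = t * β u :=
    ⟨_, mul_inv_mem_of_mem_dAut hβ hs u, by rw [inv_mul_cancel_right]⟩
  rw [hβsu]
  rcases htS with rfl | rfl | rfl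
  · rw [← apply_x_mul hβ] at hβsu
    exact absurd (mul_right_cancel (β.injective hβsu)) hsx
  · exact .inl rfl
  · exact .inr rfl

lemma apply_z_mul (hβ : β ∈ dAut (cayAdj G d.S)) {u : G} (hy : β (d.y * u) = d.y * β u) :
    β (d.z * u) = d.z * β u :=
  (apply_mul_eq_y_or_z hβ d.z_mem_S (fun h => d.x_notMem (h ▸ d.z_mem)) u).resolve_left
    fun hz => d.y_ne_z (mul_right_cancel (β.injective (hy.trans hz.symm)))

lemma y_mul_y_mul_y_mul (u : G) : d.y * (d.y * (d.y * u)) = u := by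
  rw [← mul_assoc, ← mul_assoc, ← pow_three', d.pow_three_y, one_mul]

-- the triangle `u → y u → y² u → u` is mapped to a triangle of `y`- and `z`-edges, which is
-- monochromatic
lemma apply_y_mul_y_mul (hβ : β ∈ dAut (cayAdj G d.S)) {u : G}
    (hy : β (d.y * u) = d.y * β u) :
    β (d.y * (d.y * u)) = d.y * β (d.y * u) := by
  have hyx : d.y ≠ d.x := fun h => d.x_notMem (h ▸ d.y_mem)
  refine (apply_mul_eq_y_or_z hβ d.y_mem_S hyx _).resolve_right fun hz => ?_
  rcases apply_mul_eq_y_or_z hβ d.y_mem_S hyx (d.y * (d.y * u)) with h | h <;>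
    rw [y_mul_y_mul_y_mul, hz, hy, ← mul_assoc, ← mul_assoc, eq_comm, mul_eq_right] at h
  · rw [mul_assoc, mul_eq_one_comm] at h
    exact d.y_ne_z (eq_of_mul_mul_eq_one_of_pow_three d.pow_three_y h).symm
  · rw [mul_eq_one_comm, ← mul_assoc] at h
    exact d.y_ne_z (eq_of_mul_mul_eq_one_of_pow_three d.pow_three_z h)

-- the square `u → z u → x z u = y x u ← x u ← u`
lemma apply_y_mul_x_mul (hβ : β ∈ dAut (cayAdj G d.S)) {u : G}
    (hy : β (d.y * u) = d.y * β u) :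
    β (d.y * (d.x * u)) = d.y * β (d.x * u) := by
  calc β (d.y * (d.x * u)) = β (d.x * (d.z * u)) := by rw [← mul_assoc, ← mul_assoc, x_mul_z]
    _ = d.x * (d.z * β u) := by rw [apply_x_mul hβ, apply_z_mul hβ hy]
    _ = d.y * β (d.x * u) := by rw [apply_x_mul hβ, ← mul_assoc, ← mul_assoc, x_mul_z]

lemma eq_one_of_apply_y (hβ : β ∈ dAut (cayAdj G d.S)) (hgen : closure {d.x, d.y} = ⊤)
    (h1 : β 1 = 1) (hy : β d.y = d.y) : β = 1 := by
  let P (g : G) : Prop := β g = g ∧ β (d.y * g) = d.y * β g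
  have hPx {g : G} (h : P g) : P (d.x * g) :=
    ⟨by rw [apply_x_mul hβ, h.1], apply_y_mul_x_mul hβ h.2⟩
  have hPy {g : G} (h : P g) : P (d.y * g) := ⟨by rw [h.2, h.1], apply_y_mul_y_mul hβ h.2⟩
  have hP (g : G) : P g := by
    induction hgen ▸ mem_top g using closure_induction_left with
    | one => exact ⟨h1, by rw [mul_one, h1, mul_one, hy]⟩
    | mul_left s hs g _ ih =>
      rcases hs with rfl | rfl
      exacts [hPx ih, hPy ih]
    | inv_mul_cancel s hs g _ ih =>
      rcases hs with rfl | rfl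
      · rw [d.x_inv]; exact hPx ih
      · rw [← mul_self_inv_of_pow_three d.pow_three_y, inv_inv, mul_assoc]; exact hPy (hPy ih)
  exact Equiv.ext fun g => (hP g).1

lemma eq_one_or_eq_conjX (hβ : β ∈ dAut (cayAdj G d.S)) (hgen : closure {d.x, d.y} = ⊤)
    (h1 : β 1 = 1) : β = 1 ∨ β = d.conjX := by
  rcases apply_mul_eq_y_or_z hβ d.y_mem_S (fun h => d.x_notMem (h ▸ d.y_mem)) 1 with h | h <;>
    rw [mul_one, h1, mul_one] at h
  · exact .inl (eq_one_of_apply_y hβ hgen h1 h)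
  · refine .inr (eq_inv_of_mul_eq_one_right (eq_one_of_apply_y (mul_mem d.conjX_mem_dAut hβ) hgen
      ?_ ?_) |>.trans (inv_eq_of_mul_eq_one_right d.conjX_mul_self))
    · simp [h1, conjX_apply]
    · rw [Equiv.Perm.mul_apply, h, ← conjX_y, conjX_conjX]

end Automorphism

lemma index_cayleyRR (hgen : closure {d.x, d.y} = ⊤) : (cayleyRR G d.S).index = 2 := by
  refine index_eq_two_of_mem_or_mul_mem (c := ⟨d.conjX, d.conjX_mem_dAut⟩)
    (by rw [cayleyRR, mem_subgroupOf]; exact d.conjX_notMem_range) fun ⟨b, hb⟩ => ?_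
  simp only [cayleyRR, mem_subgroupOf, Subgroup.coe_mul]
  have h1 : (rightReg G (b 1) * b) 1 = 1 := by simp
  rcases d.eq_one_or_eq_conjX (mul_mem (rightReg_mem_dAut _ _) hb) hgen h1 with h | h
  · exact .inl ⟨(b 1)⁻¹, by rw [map_inv, ← eq_inv_of_mul_eq_one_right h]⟩
  · refine .inr ⟨(b 1)⁻¹, ?_⟩
    rw [map_inv, eq_comm]
    exact eq_inv_of_mul_eq_one_right (by rw [← mul_assoc, h, conjX_mul_self])

lemma range_rightLeftHom_le_dAut :
    (rightLeftHom d.H (zpowers d.x)).range ≤ dAut (cayAdj G d.S) :=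
  range_rightLeftHom_le (fun n _ => rightReg_mem_dAut _ n) fun _ hb =>
    (zpowers_le (H := (dAut _).comap _)).2 (toPermHom_mem_dAut d.conj_x_mem_S_iff) hb

lemma range_rightLeftHom_ne_range_rightReg :
    (rightLeftHom d.H (zpowers d.x)).range ≠ (rightReg G).range := by
  have hxK : MulAction.toPermHom G G d.x ∈ (rightLeftHom d.H (zpowers d.x)).range :=
    ⟨(1, ⟨d.x, mem_zpowers d.x⟩), by ext; simp⟩
  exact fun h => d.not_commute (commute_of_toPermHom_mem_range_rightReg (h ▸ hxK) d.y)

end IndexTwoPair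

lemma Subgroup.mem_of_pow_eq_one_of_odd {G : Type*} [Group G] {H : Subgroup G}
    (hH : H.index = 2) {g : G} {n : ℕ} (hn : Odd n) (hg : g ^ n = 1) : g ∈ H := by
  obtain ⟨k, rfl⟩ := hn
  have : g = (g ^ (k + 1)) ^ 2 := by
    rw [← pow_mul, mul_comm, mul_add, mul_one, pow_succ, hg, one_mul]
  exact this ▸ sq_mem_of_index_two hH _

lemma Subgroup.notMem_of_closure_pair_eq_top {G : Type*} [Group G] {H : Subgroup G}
    (hH : H.index = 2) {x y : G} (hgen : closure {x, y} = ⊤) (hy : y ∈ H) : x ∉ H := by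
  intro hx
  have : H = ⊤ :=
    top_le_iff.1 (hgen ▸ (closure_le H).2 (Set.insert_subset_iff.2 ⟨hx, by simpa⟩))
  simp [this] at hH

lemma Commute.nonempty_mulEquiv_zmod_six {G : Type*} [Group G] {x y : G} (hxy : Commute x y)
    (hx : orderOf x = 2) (hy : orderOf y = 3) (hgen : closure {x, y} = ⊤) :
    Nonempty (G ≃* Multiplicative (ZMod 6)) := by
  have hx2 : x ^ 2 = 1 := hx ▸ pow_orderOf_eq_one x
  have hy3 : y ^ 3 = 1 := hy ▸ pow_orderOf_eq_one y
  have hxy6 : orderOf (x * y) = 6 := by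
    rw [hxy.orderOf_mul_eq_mul_orderOf_of_coprime (by rw [hx, hy]; norm_num), hx, hy]
  have hmem : ∀ g, g ∈ zpowers (x * y) := fun g => by
    refine (hgen ▸ (closure_le _).2 ?_ : ⊤ ≤ zpowers (x * y)) (mem_top g)
    have hx' := npow_mem_zpowers (x * y) 3
    have hy' := npow_mem_zpowers (x * y) 4
    rw [hxy.mul_pow, hy3, mul_one, pow_succ, hx2, one_mul] at hx'
    rw [hxy.mul_pow, show 4 = 2 * 2 from rfl, pow_mul, hx2, one_pow, one_mul,
      show 2 * 2 = 3 + 1 from rfl, pow_succ, hy3, one_mul] at hy'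
    exact Set.insert_subset_iff.2 ⟨hx', Set.singleton_subset_iff.2 hy'⟩
  have : IsCyclic G := ⟨⟨x * y, hmem⟩⟩
  exact ⟨mulEquivOfCyclicCardEq
    (by rw [← orderOf_eq_card_of_forall_mem_zpowers hmem, hxy6]; simp)⟩

theorem stmt_17_general {G : Type*} [Group G]
    (x y : G) (hx : orderOf x = 2) (hy : orderOf y = 3)
    (hgen : Subgroup.closure {x, y} = ⊤)
    (h6 : ¬ Nonempty (G ≃* Multiplicative (ZMod 6)))
    (H : Subgroup G) (hH : H.index = 2) :
    ∃ S : Set G, (1 : G) ∉ S ∧ (cayleyRR G S).index = 2 ∧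
      ∃ K : Subgroup (Equiv.Perm G), K ≤ dAut (cayAdj G S) ∧ IsRegularSub K ∧
        K ≠ (rightReg G).range ∧
        Nonempty (K ≃* (H × Multiplicative (ZMod 2))) := by
  have hyH : y ∈ H := mem_of_pow_eq_one_of_odd hH (by decide) (hy ▸ pow_orderOf_eq_one y)
  let d : IndexTwoPair G :=
    { x, y, H, index_eq_two := hH, sq_x := hx ▸ pow_orderOf_eq_one x,
      pow_three_y := hy ▸ pow_orderOf_eq_one y, y_mem := hyH,
      x_notMem := notMem_of_closure_pair_eq_top hH hgen hyH,
      not_commute := fun hxy => h6 (hxy.nonempty_mulEquiv_zmod_six hx hy hgen) }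
  have : H.Normal := normal_of_index_eq_two hH
  have hB : IsComplement' (zpowers x) H :=
    isComplement'_zpowers_of_index_eq_two hH d.sq_x d.x_notMem
  exact ⟨d.S, d.one_notMem_S, d.index_cayleyRR hgen, _, d.range_rightLeftHom_le_dAut,
    isRegularSub_range_rightLeftHom hB, d.range_rightLeftHom_ne_range_rightReg,
    ⟨(MonoidHom.ofInjective (injective_rightLeftHom hB)).symm.trans
      (.prodCongr (.refl H) (zpowersMulEquivZModTwo hx))⟩⟩

/-- If `G` is generated by an involution `x` and an element `y` of order 3, is
isomorphic to neither `ℤ/6` nor `ℤ₃ ≀ ℤ₂`, and has a subgroup `H` of index 2, then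
there is a Cayley digraph on `G` with Cayley index 2 whose automorphism group has a
regular subgroup distinct from `G` and isomorphic to `H × ℤ₂`. -/
theorem stmt_17 {G : Type*} [Group G] [Fintype G]
    (x y : G) (hx : orderOf x = 2) (hy : orderOf y = 3)
    (hgen : Subgroup.closure {x, y} = ⊤)
    (h6 : ¬ Nonempty (G ≃* Multiplicative (ZMod 6)))
    (hwr : ¬ Nonempty (G ≃* Z3wrZ2))
    (H : Subgroup G) (hH : H.index = 2) :
    ∃ S : Set G, (1 : G) ∉ S ∧ (cayleyRR G S).index = 2 ∧
      ∃ K : Subgroup (Equiv.Perm G), K ≤ dAut (cayAdj G S) ∧ IsRegularSub K ∧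
        K ≠ (rightReg G).range ∧
        Nonempty (K ≃* (H × Multiplicative (ZMod 2))) :=
  stmt_17_general x y hx hy hgen h6 H hH
end

section
/- Let G be a finite group generated by an involution x and an element y of order 3 with y^x ≠ y, y^x ≠ y⁻¹, and y^x·y ≠ y·y^x. Then the seven elements 1, yx, xy, y², y^x·y, y·y^x, (y²)^x of G are pairwise distinct. -/
lemma braid_aux {G : Type*} [Group G] {x y : G} (hxx : x*x = 1) (hy3 : y*(y*y) = 1)
    (hb : x*(y*x) = y*(x*y)) : y = 1 := by
  have hxa : ∀ a : G, x*(x*a) = a := fun a => by rw [← mul_assoc, hxx, one_mul]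
  have hy3' : y*y*y = 1 := by rw [mul_assoc]; exact hy3
  have hya : ∀ a : G, y*(y*(y*a)) = a := fun a => by
    rw [← mul_assoc, ← mul_assoc, hy3', one_mul]
  have c1 : (y*(x*y))*((y*(x*y))*(y*(x*y))) = 1 := by
    rw [← hb]; simp [mul_assoc, hxa, hya, hxx, hy3]
  have c2 : x*(y*(y*(x*(y*(y*(x*y)))))) = y*y := by
    have h := congrArg (fun t => y*(y*t)) c1
    simpa [mul_assoc, hya] using h
  have c3 : x*(y*(y*(x*(y*y)))) = y*x := by
    have h := congrArg (fun t => t*(y*(y*x))) c2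
    simpa [mul_assoc, hxa, hya, hxx] using h
  have c4 : x*(y*(y*x)) = y*(x*y) := by
    have h := congrArg (fun t => t*y) c3
    simpa [mul_assoc, hy3, hya] using h
  have c5 : y*(y*x) = y*x := mul_left_cancel (c4.trans hb.symm)
  have c6 : y*y = y := by
    have h : (y*y)*x = y*x := by rw [mul_assoc]; exact c5
    exact mul_right_cancel h
  have h7 : y*y = 1*y := by rw [one_mul]; exact c6
  exact mul_right_cancel h7

/-- If `G` is generated by an involution `x` and an element `y` of order 3 with
`y^x ∉ {y, y⁻¹}` and `y^x·y ≠ y·y^x`, then the seven listed elements are pairwise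
distinct. -/
theorem stmt_18 {G : Type*} [Group G] [Fintype G]
    (x y : G) (hx : orderOf x = 2) (hy : orderOf y = 3)
    (hgen : Subgroup.closure {x, y} = ⊤)
    (h1 : x⁻¹ * y * x ≠ y) (h2 : x⁻¹ * y * x ≠ y⁻¹)
    (h3 : (x⁻¹ * y * x) * y ≠ y * (x⁻¹ * y * x)) :
    ([1, y * x, x * y, y ^ 2, (x⁻¹ * y * x) * y, y * (x⁻¹ * y * x),
      x⁻¹ * y ^ 2 * x] : List G).Pairwise (· ≠ ·) := by
  have hxx : x * x = 1 := by
    have := pow_orderOf_eq_one x; rw [hx] at this; simpa [pow_succ] using this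
  have hy3 : y * (y * y) = 1 := by
    have := pow_orderOf_eq_one y; rw [hy] at this; simpa [pow_succ, mul_assoc] using this
  have hxi : x⁻¹ = x := inv_eq_of_mul_eq_one_right hxx
  have hyi : y⁻¹ = y * y := inv_eq_of_mul_eq_one_right hy3
  have hxa : ∀ a : G, x*(x*a) = a := fun a => by rw [← mul_assoc, hxx, one_mul]
  have hy3' : y*y*y = 1 := by rw [mul_assoc]; exact hy3
  have hya : ∀ a : G, y*(y*(y*a)) = a := fun a => by
    rw [← mul_assoc, ← mul_assoc, hy3', one_mul]
  rw [hxi] at h1 h2 h3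
  rw [hyi] at h2
  have hy1 : y ≠ 1 := by
    intro h; rw [h] at hy; simp at hy
  have hyy1 : y * y ≠ 1 := by
    intro h; apply hy1
    have := hy3; rw [h, mul_one] at this; exact this
  have hyx : y ≠ x := by
    intro h; apply hyy1; rw [h]; exact hxx
  have hyx1 : y * x ≠ 1 := by
    intro h; apply hyx
    have : y = x⁻¹ := eq_inv_of_mul_eq_one_left h
    rwa [hxi] at this
  have hxy1 : x * y ≠ 1 := by
    intro h; apply hyx
    have : y = x⁻¹ := eq_inv_of_mul_eq_one_right h
    rwa [hxi] at this
  have h1' : x*(y*x) ≠ y := by rw [← mul_assoc]; exact h1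
  have h2' : x*(y*x) ≠ y*y := by rw [← mul_assoc]; exact h2
  -- the 21 inequalities
  have g01 : (1:G) ≠ y * x := fun h => hyx1 h.symm
  have g02 : (1:G) ≠ x * y := fun h => hxy1 h.symm
  have g03 : (1:G) ≠ y * y := fun h => hyy1 h.symm
  have g04 : (1:G) ≠ x * y * x * y := by
    intro h
    have e : x*y*x = y⁻¹ := eq_inv_of_mul_eq_one_left h.symm
    rw [hyi] at e
    exact h2' ((mul_assoc x y x).symm.trans e)
  have g05 : (1:G) ≠ y * (x * y * x) := by
    intro h
    have e : x*y*x = y⁻¹ := eq_inv_of_mul_eq_one_right h.symm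
    rw [hyi] at e
    exact h2' ((mul_assoc x y x).symm.trans e)
  have g06 : (1:G) ≠ x * (y * y) * x := by
    intro h
    have e : x*(y*y) = x⁻¹ := eq_inv_of_mul_eq_one_left h.symm
    rw [hxi] at e
    apply hyy1
    have e2 : x*(y*y) = x*1 := by rw [mul_one]; exact e
    exact mul_left_cancel e2
  have g12 : y * x ≠ x * y := by
    intro h
    have e := congrArg (x * ·) h
    rw [hxa] at e
    exact h1' e
  have g13 : y * x ≠ y * y := fun h => hyx (mul_left_cancel h).symm
  have g14 : y * x ≠ x * y * x * y := by
    intro h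
    have e := congrArg (x * ·) h
    simp only [mul_assoc] at e
    rw [hxa] at e
    exact hy1 (braid_aux hxx hy3 e)
  have g15 : y * x ≠ y * (x * y * x) := by
    intro h
    have e := mul_left_cancel h
    rw [mul_assoc] at e
    have e2 : x*1 = x*(y*x) := by rw [mul_one]; exact e
    exact hyx1 (mul_left_cancel e2).symm
  have g16 : y * x ≠ x * (y * y) * x := by
    intro h
    have e := mul_right_cancel h
    have e2 := congrArg (x * ·) e
    rw [hxa] at e2
    exact hyx (mul_right_cancel e2).symm
  have g23 : x * y ≠ y * y := fun h => hyx (mul_right_cancel h).symm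
  have g24 : x * y ≠ x * y * x * y := by
    intro h
    have e : x*y = (x*y)*(x*y) := h.trans (mul_assoc (x*y) x y)
    have e2 : (x*y)*1 = (x*y)*(x*y) := by rw [mul_one]; exact e
    exact hxy1 (mul_left_cancel e2).symm
  have g25 : x * y ≠ y * (x * y * x) := by
    intro h
    have e := congrArg (· * x) h
    simp only [mul_assoc, hxx, mul_one] at e
    exact hy1 (braid_aux hxx hy3 e)
  have g26 : x * y ≠ x * (y * y) * x := by
    intro h
    have e := congrArg (x * ·) h
    simp only [mul_assoc] at e
    rw [hxa, hxa] at e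
    have e2 : y*1 = y*(y*x) := by rw [mul_one]; exact e
    exact hyx1 (mul_left_cancel e2).symm
  have g34 : y * y ≠ x * y * x * y := by
    intro h
    have e := mul_right_cancel h
    rw [mul_assoc] at e
    exact h1' e.symm
  have g35 : y * y ≠ y * (x * y * x) := by
    intro h
    have e := mul_left_cancel h
    rw [mul_assoc] at e
    exact h1' e.symm
  have g36 : y * y ≠ x * (y * y) * x := by
    intro h
    have key : x*(y*x) = (x*(y*(y*x)))*(x*(y*(y*x))) := by
      simp [mul_assoc, hxa, hya]
    have e : x*(y*(y*x)) = y*y := by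
      rw [show x*(y*(y*x)) = x*(y*y)*x from by simp [mul_assoc]]
      exact h.symm
    rw [e] at key
    simp only [mul_assoc, hya] at key
    exact h1' key
  have g45 : x * y * x * y ≠ y * (x * y * x) := h3
  have g46 : x * y * x * y ≠ x * (y * y) * x := by
    intro h
    have e := congrArg (x * ·) h
    simp only [mul_assoc] at e
    rw [hxa, hxa] at e
    have e2 := mul_left_cancel e
    have e3 := congrArg (x * ·) e2
    rw [hxa] at e3
    exact h1' e3.symm
  have g56 : y * (x * y * x) ≠ x * (y * y) * x := by
    intro h
    have e := congrArg (x * ·) h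
    simp only [mul_assoc] at e
    rw [hxa] at e
    have e2 := congrArg (· * x) e
    simp only [mul_assoc, hxx, mul_one] at e2
    have e3 := congrArg (· * (y*y)) e2
    simp only [mul_assoc, hy3, hya, mul_one] at e3
    exact h1' e3
  simp only [hxi, pow_two, List.pairwise_cons, List.mem_cons, List.not_mem_nil, or_false,
    forall_eq_or_imp, forall_eq, false_implies, and_true, List.Pairwise.nil]
  exact ⟨⟨g01, g02, g03, g04, g05, g06⟩, ⟨g12, g13, g14, g15, g16⟩, ⟨g23, g24, g25, g26⟩,
    ⟨g34, g35, g36⟩, ⟨g45, g46⟩, g56, fun _ => trivial⟩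
end
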